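/- arXiv:2109.03620 — 7 statements merged into one kernel-verified Lean document; each statement's English description precedes it below -/
import Mathlib

section
/- Let A be an s×n matrix of nonnegative integers with s ≤ n, and let λ be the minimal canon of A with min_i λ_i = 0. Then for all i, λ_i ≤ C, where C := max_{i,j} a_{i,j}, and moreover C ≤ 𝒪_A, where 𝒪_A := max over injections σ : [1,s] → [1,n] of Σ_i a_{i,σ(i)}. -/
/-- `ℓ` is a canon for the `s × n` matrix `A` of natural numbers:
`A + ℓ` possesses `s` transversal column-maxima. -/
def IsCanon {s n : ℕ} (A : Fin s → Fin n → ℕ) (ℓ : Fin s → ℕ) : Prop :=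
  ∃ σ : Fin s ↪ Fin n, ∀ i i', A i' (σ i) + ℓ i' ≤ A i (σ i) + ℓ i

/-- Jacobi's number (tropical permanent): the maximum of `∑ i, A i (σ i)`
over all injections `σ : Fin s ↪ Fin n`. -/
noncomputable def jacobiNumber {s n : ℕ} (A : Fin s → Fin n → ℕ) : ℕ :=
  Finset.univ.sup fun σ : Fin s ↪ Fin n => ∑ i, A i (σ i)

/-- For a nonnegative integer matrix with `s ≤ n`, the minimal canon `λ`
(normalized so that `min_i λ_i = 0`) satisfies `λ_i ≤ C := max_{i,j} a_{i,j}`,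
and moreover `C ≤ 𝒪_A`. -/
theorem minimal_canon_le_max_entry {s n : ℕ} (hsn : s ≤ n)
    (A : Fin s → Fin n → ℕ) (lam : Fin s → ℕ)
    (hc : IsCanon A lam) (hmin : ∀ m, IsCanon A m → lam ≤ m)
    (h0 : ∃ i, lam i = 0) :
    (∀ i, lam i ≤ Finset.univ.sup fun i => Finset.univ.sup fun j => A i j) ∧
      (Finset.univ.sup fun i => Finset.univ.sup fun j => A i j) ≤ jacobiNumber A := by
  obtain ⟨σ, hσ⟩ := hc
  obtain ⟨i₀, hi₀⟩ := h0
  constructor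
  · intro i
    have h := hσ i₀ i
    rw [hi₀, add_zero] at h
    have h1 : lam i ≤ A i₀ (σ i₀) := le_trans (Nat.le_add_left _ _) h
    refine le_trans h1 (le_trans ?_ (Finset.le_sup (Finset.mem_univ i₀)))
    exact Finset.le_sup (Finset.mem_univ (σ i₀))
  · refine Finset.sup_le fun i _ => Finset.sup_le fun j _ => ?_
    set τ : Fin s ↪ Fin n :=
      (Fin.castLEEmb hsn).trans (Equiv.swap ((Fin.castLEEmb hsn) i) j).toEmbedding with hτ
    have hτi : τ i = j := by simp [hτ, Equiv.swap_apply_left]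
    have h1 : A i j ≤ ∑ k, A k (τ k) := by
      have := Finset.single_le_sum (f := fun k => A k (τ k))
        (fun k _ => Nat.zero_le _) (Finset.mem_univ i)
      simpa [hτi] using this
    exact le_trans h1 (Finset.le_sup (f := fun σ : Fin s ↪ Fin n => ∑ i, A i (σ i)) (Finset.mem_univ τ))
end

section
/- (König's theorem) Let A be an s×n matrix of zeros and ones with s ≤ n, and let m be the smallest integer such that, for some p ∈ ℕ, all ones of A are contained in the union of p rows and m−p columns. Then m equals the maximal number of transversal ones in A, i.e., m = max over injections σ of Σ_{i=1}^s a_{i,σ(i)}. -/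
open Finset

def IsCover {ι α : Type*} (t : ι → Finset α) (R : Finset ι) (C : Finset α) : Prop :=
  ∀ i, ∀ j ∈ t i, i ∈ R ∨ j ∈ C

variable {ι α : Type*} [DecidableEq α]

theorem Finset.exists_injective_disjSum_of_card_le_card_biUnion_add (t : ι → Finset α) (d : ℕ)
    (h : ∀ S : Finset ι, #S ≤ #(S.biUnion t) + d) :
    ∃ g : ι → α ⊕ Fin d, Function.Injective g ∧
      ∀ i, g i ∈ (t i).disjSum (univ : Finset (Fin d)) := by
  refine (all_card_le_biUnion_card_iff_exists_injective _).1 fun S => ?_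
  rcases S.eq_empty_or_nonempty with rfl | ⟨i₀, hi₀⟩
  · simp
  have hsub : (S.biUnion t).disjSum (univ : Finset (Fin d)) ⊆
      S.biUnion fun i => (t i).disjSum univ := by
    rintro (a | b) hx
    · simpa using hx
    · exact mem_biUnion.2 ⟨i₀, hi₀, by simp⟩
  calc #S ≤ #(S.biUnion t) + d := h S
    _ = #((S.biUnion t).disjSum univ) := by simp
    _ ≤ _ := card_le_card hsub

variable [Fintype ι]

theorem IsCover.card_filter_mem_le {t : ι → Finset α} {R : Finset ι} {C : Finset α}
    (hcov : IsCover t R C) (σ : ι ↪ α) : #{i | σ i ∈ t i} ≤ #R + #C := by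
  classical
  set M : Finset ι := {i | σ i ∈ t i}
  have hMC : #(M \ R) ≤ #C := by
    refine card_le_card_of_injOn σ (fun i hi => ?_) σ.injective.injOn
    obtain ⟨hiM, hiR⟩ := mem_sdiff.1 hi
    exact (hcov i _ (mem_filter.1 hiM).2).resolve_left hiR
  have := card_le_card_sdiff_add_card (s := M) (t := R)
  omega

variable [Fintype α]

theorem Finset.exists_embedding_extend_of_card_le (h : Fintype.card ι ≤ Fintype.card α)
    {s : Finset ι} {f : ι → α} (hf : Set.InjOn f s) : ∃ σ : ι ↪ α, ∀ i ∈ s, σ i = f i := by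
  obtain ⟨t, hst, ht⟩ :=
    exists_superset_card_eq (s := s.image f) (card_image_le.trans (card_le_univ s)) h
  obtain ⟨e, he⟩ := exists_equiv_extend_of_card_eq ht.symm hst hf
  exact ⟨e.toEmbedding.trans (Function.Embedding.subtype _), he⟩

theorem Finset.exists_embedding_of_card_le_card_biUnion_add
    (hια : Fintype.card ι ≤ Fintype.card α) (t : ι → Finset α) (d : ℕ)
    (h : ∀ S : Finset ι, #S ≤ #(S.biUnion t) + d) :
    ∃ σ : ι ↪ α, Fintype.card ι ≤ #{i | σ i ∈ t i} + d := by
  classical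
  obtain ⟨g, hg, hgt⟩ := exists_injective_disjSum_of_card_le_card_biUnion_add t d h
  obtain ⟨σ₀⟩ := Function.Embedding.nonempty_of_card_le hια
  set T : Finset ι := {i | (g i).isLeft}
  -- `σ₀` only fills in the rows matched to extra columns, where `f` is overwritten anyway.
  set f : ι → α := fun i => Sum.elim id (fun _ => σ₀ i) (g i)
  have hfT : ∀ i ∈ T, Sum.inl (f i) = g i := by
    intro i hi
    obtain ⟨a, ha⟩ := Sum.isLeft_iff.1 (mem_filter.1 hi).2
    simp [f, ha]
  obtain ⟨σ, hσ⟩ := exists_embedding_extend_of_card_le hια (s := T) (f := f)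
    fun i hi j hj hij => hg (by rw [← hfT i hi, ← hfT j hj, hij])
  have hTσ : T ⊆ ({i | σ i ∈ t i} : Finset ι) := by
    intro i hi
    have := hgt i
    rw [← hfT i hi] at this
    simpa [hσ i hi] using this
  have hTc : #Tᶜ ≤ d := by
    calc #Tᶜ ≤ #(univ.map (Function.Embedding.inr : Fin d ↪ α ⊕ Fin d)) := by
          refine card_le_card_of_injOn g (fun i hi => ?_) hg.injOn
          obtain ⟨b, hb⟩ := Sum.isRight_iff.1 (by simpa [T] using hi)
          simp [hb]
      _ = d := by simp
  refine ⟨σ, ?_⟩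
  have := card_le_card hTσ
  rw [card_compl] at hTc
  have := card_le_univ T
  omega

theorem exists_embedding_isCover_card_le (hια : Fintype.card ι ≤ Fintype.card α)
    (t : ι → Finset α) :
    ∃ σ : ι ↪ α, ∃ R C, IsCover t R C ∧ #R + #C ≤ #{i | σ i ∈ t i} := by
  classical
  obtain ⟨T, -, hT⟩ :=
    exists_min_image univ (fun T : Finset ι => #Tᶜ + #(T.biUnion t)) univ_nonempty
  have hcov : IsCover t Tᶜ (T.biUnion t) := by
    intro i j hj
    by_cases hi : i ∈ T
    · exact .inr (mem_biUnion.2 ⟨i, hi, hj⟩)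
    · exact .inl (mem_compl.2 hi)
  have hT₀ : #Tᶜ + #(T.biUnion t) ≤ Fintype.card ι := by simpa using hT ∅ (mem_univ _)
  obtain ⟨σ, hσ⟩ := exists_embedding_of_card_le_card_biUnion_add hια t
    (Fintype.card ι - (#Tᶜ + #(T.biUnion t))) fun S => by
      have hS := hT S (mem_univ _)
      rw [card_compl S] at hS
      have := card_le_univ S
      omega
  exact ⟨σ, _, _, hcov, by omega⟩

theorem sInf_card_isCover_eq_sup_card_matched (hια : Fintype.card ι ≤ Fintype.card α)
    (t : ι → Finset α) :
    sInf {m | ∃ R C, IsCover t R C ∧ #R + #C = m} =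
      univ.sup fun σ : ι ↪ α => #{i | σ i ∈ t i} := by
  obtain ⟨σ, R, C, hcov, hle⟩ := exists_embedding_isCover_card_le hια t
  apply le_antisymm
  · refine le_trans (Nat.sInf_le (m := #R + #C) ⟨R, C, hcov, rfl⟩) ?_
    calc #R + #C ≤ #{i | σ i ∈ t i} := hle
      _ ≤ _ := le_sup (f := fun σ : ι ↪ α => #{i | σ i ∈ t i}) (mem_univ σ)
  · refine le_csInf ⟨#R + #C, R, C, hcov, rfl⟩ ?_
    rintro _ ⟨R', C', hcov', rfl⟩
    exact Finset.sup_le fun τ _ => hcov'.card_filter_mem_le τ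

/-- König's theorem: for an `s × n` matrix of zeros and ones with `s ≤ n`, the
minimal number `|R| + |C|` of rows and columns covering all the ones equals
the maximal number of transversal ones. -/
theorem konig {s n : ℕ} (hsn : s ≤ n) (A : Fin s → Fin n → ℕ)
    (h01 : ∀ i j, A i j = 0 ∨ A i j = 1) :
    sInf {m : ℕ | ∃ (R : Finset (Fin s)) (C : Finset (Fin n)),
        (∀ i j, A i j = 1 → i ∈ R ∨ j ∈ C) ∧ R.card + C.card = m}
      = jacobiNumber A := by
  set ones : Fin s → Finset (Fin n) := fun i => {j | A i j = 1}
  have sum_eq (σ : Fin s ↪ Fin n) : ∑ i, A i (σ i) = #{i | σ i ∈ ones i} := by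
    rw [card_filter]
    refine sum_congr rfl fun i _ => ?_
    rcases h01 i (σ i) with h | h <;> simp [ones, h]
  convert sInf_card_isCover_eq_sup_card_matched (by simpa using hsn) ones using 2
  · simp [IsCover, ones]
  · exact sup_congr rfl fun σ _ => sum_eq σ
end

section
/- Let A be an n×n matrix over a totally ordered commutative group such that the diagonal entries a_{i,i} form a maximal transversal sum, and let ℓ be a canon of A with min_i ℓ_i = 0. Then ℓ is the minimal canon of A if and only if from every row there is a path (in the reflexive transitive closure of the elementary path relation: there is an elementary path from row i to row i' if a_{i,i}+ℓ_i = a_{i',i}+ℓ_{i'}) to some row i with ℓ_i = 0. -/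
/-- The tropical determinant of an `n × n` matrix over a totally ordered
commutative group. -/
def tropDet {n : ℕ} {M : Type*} [AddCommGroup M] [LinearOrder M] [IsOrderedAddMonoid M]
    (A : Fin n → Fin n → M) : M :=
  Finset.univ.sup' ⟨1, Finset.mem_univ 1⟩
    fun σ : Equiv.Perm (Fin n) => ∑ i, A i (σ i)

/-- `ℓ` is a canon for `A` with respect to the diagonal transversal family:
`ℓ` is nonnegative and each `a_{i,i} + ℓ_i` is maximal in column `i` of `A + ℓ`. -/
def DiagCanon {n : ℕ} {M : Type*} [AddCommGroup M] [LinearOrder M] [IsOrderedAddMonoid M]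
    (A : Fin n → Fin n → M) (ℓ : Fin n → M) : Prop :=
  (∀ i, 0 ≤ ℓ i) ∧ ∀ i i', A i' i + ℓ i' ≤ A i i + ℓ i

/-!
If `m` is any canon, `ℓ - m` cannot decrease along an elementary path of `ℓ`, since
`a_{i,i} + ℓ_i = a_{i',i} + ℓ_{i'}` while `a_{i',i} + m_{i'} ≤ a_{i,i} + m_i`; so a path from `i`
to a zero of `ℓ` forces `ℓ_i - m_i ≤ -m_{i'} ≤ 0`. Conversely, if no zero of `ℓ` is reachable from
`i`, the set `S` of rows reachable from `i` is closed under elementary paths, so the canon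
inequalities leaving `S` are strict and `ℓ` is positive on `S`; lowering `ℓ` on `S` by the least
of these finitely many positive slacks gives a canon below `ℓ` at `i`.
-/

theorem Set.Finite.exists_pos_le {M : Type*} [LinearOrder M] [Zero M] {T : Set M}
    (hT : T.Finite) (hne : T.Nonempty) (hpos : ∀ x ∈ T, 0 < x) :
    ∃ ε, 0 < ε ∧ ∀ x ∈ T, ε ≤ x :=
  let ⟨ε, hεT, hmin⟩ := T.exists_min_image id hT hne
  ⟨ε, hpos ε hεT, hmin⟩

def ElemPath {n : ℕ} {M : Type*} [Add M] (A : Fin n → Fin n → M) (ℓ : Fin n → M)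
    (i i' : Fin n) : Prop :=
  A i i + ℓ i = A i' i + ℓ i'

namespace DiagCanon

variable {n : ℕ} {M : Type*} [AddCommGroup M] [LinearOrder M] [IsOrderedAddMonoid M]
  {A : Fin n → Fin n → M} {ℓ m : Fin n → M}

theorem sub_le_sub_of_elemPath (hm : DiagCanon A m) {a b : Fin n} (hab : ElemPath A ℓ a b) :
    ℓ a - m a ≤ ℓ b - m b := by
  have := hm.2 a b
  unfold ElemPath at hab
  grind

theorem sub_le_sub_of_reflTransGen (hm : DiagCanon A m) {a b : Fin n}
    (hab : Relation.ReflTransGen (ElemPath A ℓ) a b) : ℓ a - m a ≤ ℓ b - m b := by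
  induction hab with
  | refl => exact le_rfl
  | tail _ hbc ih => exact ih.trans (hm.sub_le_sub_of_elemPath hbc)

theorem le_of_reflTransGen_of_eq_zero (hm : DiagCanon A m) {a b : Fin n}
    (hab : Relation.ReflTransGen (ElemPath A ℓ) a b) (hb : ℓ b = 0) : ℓ a ≤ m a := by
  have h := hm.sub_le_sub_of_reflTransGen hab
  rw [hb, zero_sub] at h
  exact sub_nonpos.mp (h.trans (neg_nonpos.mpr (hm.1 b)))

theorem sub_indicator {S : Set (Fin n)} {ε : M} (hℓ : DiagCanon A ℓ) (hε : 0 ≤ ε)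
    (hεℓ : ∀ a ∈ S, ε ≤ ℓ a)
    (hgap : ∀ a ∈ S, ∀ b ∉ S, ε ≤ A a a + ℓ a - (A b a + ℓ b)) :
    DiagCanon A (ℓ - S.indicator fun _ => ε) := by
  refine ⟨fun a => ?_, fun a b => ?_⟩
  · by_cases ha : a ∈ S
    · simpa [ha] using hεℓ a ha
    · simpa [ha] using hℓ.1 a
  · have hab := hℓ.2 a b
    by_cases ha : a ∈ S <;> by_cases hb : b ∈ S
    · simp only [Pi.sub_apply, Set.indicator_of_mem ha, Set.indicator_of_mem hb]
      grind
    · have := hgap a ha b hb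
      simp only [Pi.sub_apply, Set.indicator_of_mem ha, Set.indicator_of_notMem hb]
      grind
    · simp only [Pi.sub_apply, Set.indicator_of_notMem ha, Set.indicator_of_mem hb]
      grind
    · simpa [ha, hb] using hab

theorem exists_lt_of_forall_elemPath_mem (hℓ : DiagCanon A ℓ) {S : Set (Fin n)} {i : Fin n}
    (hi : i ∈ S) (hpos : ∀ a ∈ S, 0 < ℓ a) (hS : ∀ a ∈ S, ∀ b, ElemPath A ℓ a b → b ∈ S) :
    ∃ m, DiagCanon A m ∧ m i < ℓ i := by
  set gap : Fin n × Fin n → M := fun p => A p.1 p.1 + ℓ p.1 - (A p.2 p.1 + ℓ p.2)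
  have hgap_pos : ∀ a ∈ S, ∀ b ∉ S, 0 < gap (a, b) := fun a ha b hb =>
    sub_pos.mpr <| (hℓ.2 a b).lt_of_ne fun h => hb (hS a ha b h.symm)
  obtain ⟨ε, hε, hεT⟩ := (Set.toFinite (ℓ '' S ∪ gap '' {p | p.1 ∈ S ∧ p.2 ∉ S})).exists_pos_le
    ⟨ℓ i, .inl ⟨i, hi, rfl⟩⟩ <| by
      rintro x (⟨a, ha, rfl⟩ | ⟨⟨a, b⟩, ⟨ha, hb⟩, rfl⟩)
      exacts [hpos a ha, hgap_pos a ha b hb]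
  refine ⟨_, hℓ.sub_indicator hε.le (fun a ha => hεT _ (.inl ⟨a, ha, rfl⟩))
    (fun a ha b hb => hεT _ (.inr ⟨(a, b), ⟨ha, hb⟩, rfl⟩)), ?_⟩
  simpa [Set.indicator_of_mem hi] using hε

end DiagCanon

theorem minimal_canon_iff_path_to_zero_general {n : ℕ} {M : Type*}
    [AddCommGroup M] [LinearOrder M] [IsOrderedAddMonoid M] (A : Fin n → Fin n → M) (ℓ : Fin n → M)
    (hc : DiagCanon A ℓ) :
    (∀ m, DiagCanon A m → ℓ ≤ m) ↔
      ∀ i, ∃ i', Relation.ReflTransGen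
          (fun a b => A a a + ℓ a = A b a + ℓ b) i i' ∧ ℓ i' = 0 := by
  refine ⟨fun hmin i => ?_, fun h m hm a => ?_⟩
  · by_contra! hno
    obtain ⟨m, hm, hlt⟩ := hc.exists_lt_of_forall_elemPath_mem
      (S := {j | Relation.ReflTransGen (ElemPath A ℓ) i j}) .refl
      (fun a ha => (hc.1 a).lt_of_ne' (hno a ha)) (fun _ ha _ hab => ha.tail hab)
    exact (hmin m hm i).not_gt hlt
  · obtain ⟨b, hab, hb⟩ := h a
    exact hm.le_of_reflTransGen_of_eq_zero hab hb

/-- Assume the diagonal of `A` is a maximal transversal sum and `ℓ` is a canon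
with `min ℓ = 0`.  Then `ℓ` is the minimal canon iff from every row there is a
path (reflexive transitive closure of the elementary path relation
`i → i' ↔ a_{i,i} + ℓ_i = a_{i',i} + ℓ_{i'}`) to some row `i'` with `ℓ_{i'} = 0`. -/
theorem minimal_canon_iff_path_to_zero {n : ℕ} [NeZero n] {M : Type*}
    [AddCommGroup M] [LinearOrder M] [IsOrderedAddMonoid M] (A : Fin n → Fin n → M) (ℓ : Fin n → M)
    (hdiag : ∑ i, A i i = tropDet A)
    (hc : DiagCanon A ℓ) (h0 : ∃ i, ℓ i = 0) :
    (∀ m, DiagCanon A m → ℓ ≤ m) ↔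
      ∀ i, ∃ i', Relation.ReflTransGen
          (fun a b => A a a + ℓ a = A b a + ℓ b) i i' ∧ ℓ i' = 0 :=
  minimal_canon_iff_path_to_zero_general A ℓ hc
end

section
/- Let A be an n×n matrix over a totally ordered commutative group that possesses at least one transversal set of n column-maxima. Then the reflexive transitive closure of the path relation on rows does not depend on the choice of this transversal set of maxima. -/
/-!
Let `σ`, `τ` be two transversals of column maxima. For each row `y`, column `τ y` holds two
maxima, at rows `y` and `g y := σ⁻¹ (τ y)`, so they are equal and `y` is `τ`-related to `g y`.
Following the cycle of the permutation `g` through `i` thus gives a `τ`-path from `i` to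
`g⁻¹ i = τ⁻¹ (σ i)`, whose starred maximum lies in column `σ i` and equals `A i (σ i)`;
hence every elementary `σ`-step is a `τ`-path, and by symmetry the closures agree.
-/

namespace Equiv.Perm

variable {α : Type*} [Finite α] {r : α → α → Prop} {f : Perm α} {x y : α}

theorem SameCycle.reflTransGen (hr : ∀ z, r z (f z)) (hxy : f.SameCycle x y) :
    Relation.ReflTransGen r x y := by
  have hpow (k : ℕ) : Relation.ReflTransGen r x ((f ^ k) x) := by
    induction k with
    | zero => exact .refl
    | succ k ih => exact ih.tail (by rw [pow_succ', mul_apply]; exact hr _)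
  obtain ⟨k, -, rfl⟩ := hxy.exists_pow_eq'
  exact hpow k

end Equiv.Perm

section PathRel

variable {ι κ M : Type*} [PartialOrder M] (A : ι → κ → M)

/-- The elementary path relation of the transversal `σ`, whose starred entries are `A i (σ i)`. -/
def pathRel (σ : ι ≃ κ) (i j : ι) : Prop :=
  A j (σ i) = A i (σ i)

variable {A} {σ τ : ι ≃ κ}

theorem pathRel_symm_apply (hσ : ∀ i i', A i' (σ i) ≤ A i (σ i))
    (hτ : ∀ i i', A i' (τ i) ≤ A i (τ i)) (y : ι) : pathRel A τ y (σ.symm (τ y)) :=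
  le_antisymm (hτ y _) (by simpa using hσ (σ.symm (τ y)) y)

theorem reflTransGen_pathRel_of_pathRel [Finite ι] (hσ : ∀ i i', A i' (σ i) ≤ A i (σ i))
    (hτ : ∀ i i', A i' (τ i) ≤ A i (τ i)) {i j : ι} (hij : pathRel A σ i j) :
    Relation.ReflTransGen (pathRel A τ) i j := by
  set k := τ.symm (σ i)
  have hcycle : Equiv.Perm.SameCycle (τ.trans σ.symm) i k := ⟨-1, by simp [k]⟩
  have hki : pathRel A τ k j := by
    have hk := pathRel_symm_apply hσ hτ k
    simp only [pathRel, k, Equiv.apply_symm_apply, Equiv.symm_apply_apply] at hk ⊢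
    rw [hij, hk]
  exact (hcycle.reflTransGen (pathRel_symm_apply hσ hτ)).tail hki

theorem reflTransGen_pathRel_eq [Finite ι] (hσ : ∀ i i', A i' (σ i) ≤ A i (σ i))
    (hτ : ∀ i i', A i' (τ i) ≤ A i (τ i)) :
    Relation.ReflTransGen (pathRel A σ) = Relation.ReflTransGen (pathRel A τ) :=
  le_antisymm
    (Relation.reflTransGen_closed fun _ _ ↦ reflTransGen_pathRel_of_pathRel hσ hτ)
    (Relation.reflTransGen_closed fun _ _ ↦ reflTransGen_pathRel_of_pathRel hτ hσ)

end PathRel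

theorem path_relation_independent_general {n : ℕ} {M : Type*}
    [LinearOrder M] (A : Fin n → Fin n → M)
    (σ τ : Equiv.Perm (Fin n))
    (hσ : ∀ i i', A i' (σ i) ≤ A i (σ i))
    (hτ : ∀ i i', A i' (τ i) ≤ A i (τ i)) :
    Relation.ReflTransGen (fun i j => A j (σ i) = A i (σ i)) =
      Relation.ReflTransGen (fun i j => A j (τ i) = A i (τ i)) :=
  reflTransGen_pathRel_eq hσ hτ

/-- Let `A` be an `n × n` matrix over a totally ordered commutative group, and
let `σ`, `τ` be two transversal sets of `n` column-maxima of `A` (i.e. each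
`A i (σ i)` is maximal in its column).  Then the reflexive transitive closures
of the two induced elementary path relations on rows coincide; the elementary
path relation for `σ` relates row `i` to row `j` iff the starred maximum
`A i (σ i)` equals the entry `A j (σ i)` of row `j` in the same column. -/
theorem path_relation_independent {n : ℕ} {M : Type*}
    [AddCommGroup M] [LinearOrder M] [IsOrderedAddMonoid M] (A : Fin n → Fin n → M)
    (σ τ : Equiv.Perm (Fin n))
    (hσ : ∀ i i', A i' (σ i) ≤ A i (σ i))
    (hτ : ∀ i i', A i' (τ i) ≤ A i (τ i)) :
    Relation.ReflTransGen (fun i j => A j (σ i) = A i (σ i)) =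
      Relation.ReflTransGen (fun i j => A j (τ i) = A i (τ i)) :=
  path_relation_independent_general A σ τ hσ hτ
end

section
/- Let G be the weighted directed graph on vertices {0,1,...,n} associated to an n×n matrix A with canon A+ℓ whose diagonal entries form a maximal transversal sum: the edge (i,j) for i,j ∈ [1,n] has weight w_{i,j} := a_{i,i}+ℓ_i − a_{j,i} − ℓ_j ≥ 0, and the edge (i,0) has weight w_{i,0} := ℓ_i. Then a vector λ is the minimal canon of A if and only if for every vertex i ∈ [1,n], the length of a shortest path from i to 0 in G equals ℓ_i − λ_i. -/
/-- Cost of a directed path in the graph on `{0, 1, …, n}` associated to the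
canon `A + ℓ`: from vertex `i`, following the list of intermediate vertices and
finally taking the edge to vertex `0`.  The edge `(i, j)` has weight
`a_{i,i} + ℓ_i − a_{j,i} − ℓ_j`, and the edge `(i, 0)` has weight `ℓ_i`. -/
def pathCost {n : ℕ} {M : Type*} [AddCommGroup M] [LinearOrder M] [IsOrderedAddMonoid M]
    (A : Fin n → Fin n → M) (ℓ : Fin n → M) : Fin n → List (Fin n) → M
  | i, [] => ℓ i
  | i, j :: r => (A i i + ℓ i - (A j i + ℓ j)) + pathCost A ℓ j r

section ShortestPath

variable {n : ℕ} {M : Type*} [AddCommGroup M] [LinearOrder M] [IsOrderedAddMonoid M]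
  {A : Fin n → Fin n → M} {ℓ : Fin n → M}

lemma pathCost_cons (i j : Fin n) (r : List (Fin n)) :
    pathCost A ℓ i (j :: r) = (A i i + ℓ i - (A j i + ℓ j)) + pathCost A ℓ j r := rfl

lemma DiagCanon.pathCost_le_pathCost_append_cons (hc : DiagCanon A ℓ) (u : List (Fin n))
    (i k : Fin n) (t : List (Fin n)) :
    pathCost A ℓ k t ≤ pathCost A ℓ i (u ++ k :: t) := by
  induction u generalizing i with
  | nil => exact le_add_of_nonneg_left (sub_nonneg.2 (hc.2 i k))
  | cons j u ih => exact (ih j).trans (le_add_of_nonneg_left (sub_nonneg.2 (hc.2 i j)))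

lemma DiagCanon.exists_nodup_pathCost_le (hc : DiagCanon A ℓ) (p : List (Fin n)) (i : Fin n) :
    ∃ q, (i :: q).Nodup ∧ pathCost A ℓ i q ≤ pathCost A ℓ i p := by
  induction p generalizing i with
  | nil => exact ⟨[], List.nodup_singleton i, le_rfl⟩
  | cons j r ih =>
    obtain ⟨q, hq, hqr⟩ := ih j
    have hjq : pathCost A ℓ i (j :: q) ≤ pathCost A ℓ i (j :: r) := add_le_add_right hqr _
    by_cases hi : i ∈ j :: q
    · obtain ⟨u, t, hut⟩ := List.append_of_mem hi
      rw [hut] at hq hjq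
      exact ⟨t, hq.of_append_right, (hc.pathCost_le_pathCost_append_cons u i i t).trans hjq⟩
    · exact ⟨j :: q, List.nodup_cons.2 ⟨hi, hq⟩, hjq⟩

lemma DiagCanon.exists_isLeast_range_pathCost (hc : DiagCanon A ℓ) (i : Fin n) :
    ∃ d, IsLeast (Set.range (pathCost A ℓ i)) d := by
  have hfin : {q : List (Fin n) | (i :: q).Nodup}.Finite :=
    (List.finite_length_le (Fin n) n).subset fun q hq ↦ by
      simpa using (List.nodup_cons.1 hq).2.length_le_card
  obtain ⟨q₀, -, hq₀⟩ :=
    Set.exists_min_image _ (pathCost A ℓ i) hfin ⟨[], List.nodup_singleton i⟩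
  refine ⟨pathCost A ℓ i q₀, ⟨q₀, rfl⟩, ?_⟩
  rintro _ ⟨p, rfl⟩
  obtain ⟨q, hq, hqp⟩ := hc.exists_nodup_pathCost_le p i
  exact (hq₀ q hq).trans hqp

lemma DiagCanon.sub_le_pathCost {m : Fin n → M} (hm : DiagCanon A m) (p : List (Fin n))
    (i : Fin n) : ℓ i - m i ≤ pathCost A ℓ i p := by
  induction p generalizing i with
  | nil => exact sub_le_self _ (hm.1 i)
  | cons j r ih =>
    have hedge := sub_nonneg.2 (hm.2 i j)
    have hrest := sub_nonneg.2 (ih j)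
    rw [pathCost_cons, ← sub_nonneg]
    convert add_nonneg hedge hrest using 1
    abel

lemma diagCanon_sub_of_isLeast_pathCost {d : Fin n → M}
    (hd : ∀ i, IsLeast (Set.range (pathCost A ℓ i)) (d i)) : DiagCanon A (ℓ - d) := by
  refine ⟨fun i ↦ sub_nonneg.2 ((hd i).2 ⟨[], rfl⟩), fun i i' ↦ ?_⟩
  obtain ⟨q, hq⟩ := (hd i').1
  have htriangle : d i ≤ (A i i + ℓ i - (A i' i + ℓ i')) + d i' :=
    (hd i).2 ⟨i' :: q, by rw [pathCost_cons, hq]⟩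
  rw [← sub_nonneg] at htriangle ⊢
  convert htriangle using 1
  simp only [Pi.sub_apply]
  abel

lemma isLeast_diagCanon_sub_of_isLeast_pathCost {d : Fin n → M}
    (hd : ∀ i, IsLeast (Set.range (pathCost A ℓ i)) (d i)) :
    IsLeast {m | DiagCanon A m} (ℓ - d) := by
  refine ⟨diagCanon_sub_of_isLeast_pathCost hd, fun m hm i ↦ ?_⟩
  obtain ⟨q, hq⟩ := (hd i).1
  exact sub_le_comm.1 (hq ▸ hm.sub_le_pathCost q i)

end ShortestPath

theorem minimal_canon_iff_shortest_path_general {n : ℕ} {M : Type*}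
    [AddCommGroup M] [LinearOrder M] [IsOrderedAddMonoid M] (A : Fin n → Fin n → M) (ℓ lam : Fin n → M)
    (hc : DiagCanon A ℓ) :
    (DiagCanon A lam ∧ ∀ m, DiagCanon A m → lam ≤ m) ↔
      ∀ i, IsLeast (Set.range (pathCost A ℓ i)) (ℓ i - lam i) := by
  choose d hd using hc.exists_isLeast_range_pathCost
  have hmin := isLeast_diagCanon_sub_of_isLeast_pathCost hd
  calc IsLeast {m | DiagCanon A m} lam ↔ lam = ℓ - d :=
        ⟨fun h ↦ h.unique hmin, fun h ↦ h ▸ hmin⟩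
    _ ↔ ∀ i, ℓ i - lam i = d i :=
        funext_iff.trans <| forall_congr' fun i ↦ by
          rw [Pi.sub_apply, eq_sub_iff_add_eq, sub_eq_iff_eq_add', eq_comm]
    _ ↔ ∀ i, IsLeast (Set.range (pathCost A ℓ i)) (ℓ i - lam i) :=
        forall_congr' fun i ↦ ⟨fun h ↦ h ▸ hd i, fun h ↦ h.unique (hd i)⟩

/-- Shortest-path characterization of the minimal canon: assuming the diagonal
of `A` is a maximal transversal sum and `ℓ` is a canon of `A`, a vector `λ`
is the minimal canon of `A` iff for every vertex `i` the shortest path from `i`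
to `0` in the associated weighted graph exists and has length `ℓ_i − λ_i`. -/
theorem minimal_canon_iff_shortest_path {n : ℕ} {M : Type*}
    [AddCommGroup M] [LinearOrder M] [IsOrderedAddMonoid M] (A : Fin n → Fin n → M) (ℓ lam : Fin n → M)
    (hdiag : ∑ i, A i i = tropDet A) (hc : DiagCanon A ℓ) :
    (DiagCanon A lam ∧ ∀ m, DiagCanon A m → lam ≤ m) ↔
      ∀ i, IsLeast (Set.range (pathCost A ℓ i)) (ℓ i - lam i) :=
  minimal_canon_iff_shortest_path_general A ℓ lam hc
end

section
/- Let A be an n×n matrix over a totally ordered group; define a weighted directed graph G on {0,1,...,n} with edge weights w_{i,0} := 0 and w_{i,j} := a_{i,i} − a_{j,i} for i,j ∈ [1,n]. Then the diagonal entries a_{i,i} of A form a maximal transversal sum (Σ_i a_{i,i} = 𝒪_A) if and only if G admits no directed cycle of strictly negative total weight. -/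
/-- Weight of the directed walk starting at `i`, passing through the vertices
of the list, and ending at `j`, where the edge `(i, j)` has weight
`w_{i,j} := a_{i,i} − a_{j,i}`. -/
def pathW {n : ℕ} {M : Type*} [AddCommGroup M] [LinearOrder M] [IsOrderedAddMonoid M]
    (A : Fin n → Fin n → M) : Fin n → List (Fin n) → Fin n → M
  | i, [], j => A i i - A j i
  | i, k :: r, j => (A i i - A k i) + pathW A k r j

/-!
A permutation `τ` is the cycle cover `j ↦ τ j` of the graph, of weight `permWeight A τ`.
Reindexing by `τ` turns this weight into `∑ⱼ a_{jj} - ∑ⱼ a_{j, τ⁻¹ j}`, so the diagonal is a maximal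
transversal exactly when every cycle cover has nonnegative weight. The weight is additive over
disjoint permutations, so by cycle decomposition it suffices to check cycles, i.e. the covers
`(i :: p).formPerm` of simple closed walks, whose weight is the walk weight `pathW A i p i`.
Conversely, a closed walk with a repeated vertex splits there into two shorter closed walks, so
the weight of every closed walk is a sum of weights of simple ones.
-/

open Equiv Finset

theorem List.zipWith_rotate_one_eq_map_formPerm {α β : Type*} [DecidableEq α] (f : α → α → β)
    {l : List α} (hl : l.Nodup) :
    zipWith f l (l.rotate 1) = l.map fun x => f x (l.formPerm x) := by
  refine ext_getElem (by simp) fun t _ _ => ?_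
  simp only [getElem_zipWith, getElem_map, getElem_rotate, l.formPerm_apply_getElem hl]

section PermWeight

variable {ι M : Type*} [Fintype ι] [AddCommGroup M]

def permWeight (A : ι → ι → M) (τ : Perm ι) : M :=
  ∑ j, (A j j - A (τ j) j)

theorem permWeight_eq_sub (A : ι → ι → M) (τ : Perm ι) :
    permWeight A τ = ∑ j, A j j - ∑ j, A j (τ⁻¹ j) := by
  rw [permWeight, sum_sub_distrib, ← Equiv.sum_comp τ (fun j => A j (τ⁻¹ j))]
  simp

theorem permWeight_mul_of_disjoint (A : ι → ι → M) {σ τ : Perm ι} (h : σ.Disjoint τ) :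
    permWeight A (σ * τ) = permWeight A σ + permWeight A τ := by
  rw [permWeight, permWeight, permWeight, ← sum_add_distrib]
  refine sum_congr rfl fun j _ => ?_
  rcases h j with hσ | hτ
  · have hστ : σ (τ j) = τ j := by
      rcases h (τ j) with h' | h'
      · exact h'
      · rw [τ.injective h']; exact hσ
    simp [hσ, hστ]
  · simp [hτ]

theorem permWeight_formPerm [DecidableEq ι] (A : ι → ι → M) {l : List ι} (hl : l.Nodup) :
    permWeight A l.formPerm = (List.zipWith (fun x y => A x x - A y x) l (l.rotate 1)).sum := by
  rw [List.zipWith_rotate_one_eq_map_formPerm _ hl, ← List.sum_toFinset _ hl, permWeight]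
  refine (sum_subset (subset_univ _) fun j _ hj => ?_).symm
  rw [List.formPerm_apply_of_notMem (List.mem_toFinset.not.mp hj), sub_self]

end PermWeight

theorem permWeight_nonneg_of_isCycle {ι M : Type*} [Fintype ι] [AddCommGroup M] [PartialOrder M]
    [IsOrderedAddMonoid M] {A : ι → ι → M} (h : ∀ c : Perm ι, c.IsCycle → 0 ≤ permWeight A c)
    (τ : Perm ι) : 0 ≤ permWeight A τ := by
  induction τ using Perm.cycle_induction_on with
  | base_one => simp [permWeight]
  | base_cycles c hc => exact h c hc
  | induction_disjoint σ τ hd _ hσ hτ =>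
    rw [permWeight_mul_of_disjoint A hd]
    exact add_nonneg hσ hτ

theorem Equiv.Perm.IsCycle.exists_nodup_formPerm {ι : Type*} [Fintype ι] [DecidableEq ι]
    {c : Perm ι} (hc : c.IsCycle) :
    ∃ (i : ι) (p : List ι), (i :: p).Nodup ∧ (i :: p).formPerm = c := by
  obtain ⟨x, hx⟩ := hc.nonempty_support
  obtain ⟨i, p, hip⟩ := List.exists_cons_of_ne_nil (by simpa using hx : c.toList x ≠ [])
  refine ⟨i, p, hip ▸ Perm.nodup_toList c x, ?_⟩
  rw [← hip, Perm.formPerm_toList, hc.cycleOf_eq (Perm.mem_support.mp hx)]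

theorem List.exists_eq_append_cons_append_cons_of_not_nodup {α : Type*} {l : List α}
    (h : ¬ l.Nodup) : ∃ (x : α) (l₁ l₂ l₃ : List α), l = l₁ ++ x :: (l₂ ++ x :: l₃) := by
  induction l with
  | nil => simp at h
  | cons a r ih =>
    by_cases ha : a ∈ r
    · obtain ⟨s, t, rfl⟩ := List.append_of_mem ha
      exact ⟨a, [], s, t, rfl⟩
    · obtain ⟨x, l₁, l₂, l₃, rfl⟩ := ih fun hr => h (List.nodup_cons.mpr ⟨ha, hr⟩)
      exact ⟨x, a :: l₁, l₂, l₃, rfl⟩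

section PathWeight

variable {n : ℕ} {M : Type*} [AddCommGroup M] [LinearOrder M] [IsOrderedAddMonoid M]
  (A : Fin n → Fin n → M)

theorem pathW_append (i k j : Fin n) (p q : List (Fin n)) :
    pathW A i (p ++ k :: q) j = pathW A i p k + pathW A k q j := by
  induction p generalizing i with
  | nil => rfl
  | cons a r ih => simp only [List.cons_append, pathW, ih, add_assoc]

theorem pathW_eq_sum_zipWith (i j : Fin n) (p : List (Fin n)) :
    pathW A i p j = (List.zipWith (fun x y => A x x - A y x) (i :: p) (p ++ [j])).sum := by
  induction p generalizing i with
  | nil => simp [pathW]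
  | cons a r ih => simp [pathW, ih]

theorem pathW_eq_permWeight_formPerm {i : Fin n} {p : List (Fin n)} (hl : (i :: p).Nodup) :
    pathW A i p i = permWeight A (i :: p).formPerm := by
  rw [permWeight_formPerm A hl, pathW_eq_sum_zipWith, List.rotate_cons_succ, List.rotate_zero]

theorem pathW_self_nonneg_of_nodup (h : ∀ i p, (i :: p).Nodup → 0 ≤ pathW A i p i)
    (i : Fin n) (p : List (Fin n)) : 0 ≤ pathW A i p i := by
  by_cases hl : (i :: p).Nodup
  · exact h i p hl
  obtain ⟨x, l₁, l₂, l₃, he⟩ := List.exists_eq_append_cons_append_cons_of_not_nodup hl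
  cases l₁ with
  | nil =>
    simp only [List.nil_append, List.cons.injEq] at he
    obtain ⟨rfl, rfl⟩ := he
    rw [pathW_append]
    exact add_nonneg (pathW_self_nonneg_of_nodup h i l₂) (pathW_self_nonneg_of_nodup h i l₃)
  | cons a l₁ =>
    simp only [List.cons_append, List.cons.injEq] at he
    obtain ⟨rfl, rfl⟩ := he
    have hsplit : pathW A i (l₁ ++ x :: (l₂ ++ x :: l₃)) i =
        pathW A i (l₁ ++ x :: l₃) i + pathW A x l₂ x := by
      rw [pathW_append, pathW_append, pathW_append]
      abel
    rw [hsplit]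
    exact add_nonneg (pathW_self_nonneg_of_nodup h i _) (pathW_self_nonneg_of_nodup h x l₂)
termination_by p.length
decreasing_by all_goals subst_vars; simp only [List.length_append, List.length_cons]; omega

end PathWeight

theorem sum_diag_eq_tropDet_iff {n : ℕ} {M : Type*} [AddCommGroup M] [LinearOrder M]
    [IsOrderedAddMonoid M] (A : Fin n → Fin n → M) :
    ∑ i, A i i = tropDet A ↔ ∀ τ, 0 ≤ permWeight A τ := by
  have hdiag : ∑ i, A i i ≤ tropDet A :=
    le_sup' (fun σ : Perm (Fin n) => ∑ i, A i (σ i)) (mem_univ 1)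
  simp only [permWeight_eq_sub, sub_nonneg]
  rw [← hdiag.ge_iff_eq]
  exact (sup'_le_iff _ _).trans ⟨fun h τ => h τ⁻¹ (mem_univ _), fun h σ _ => inv_inv σ ▸ h σ⁻¹⟩

/-- The diagonal entries of `A` form a maximal transversal sum iff the
associated weighted directed graph (with `w_{i,j} = a_{i,i} − a_{j,i}`)
admits no directed cycle of strictly negative total weight. -/
theorem diag_maximal_iff_no_negative_cycle {n : ℕ} {M : Type*}
    [AddCommGroup M] [LinearOrder M] [IsOrderedAddMonoid M] (A : Fin n → Fin n → M) :
    (∑ i, A i i = tropDet A) ↔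
      ∀ (i : Fin n) (p : List (Fin n)), 0 ≤ pathW A i p i := by
  rw [sum_diag_eq_tropDet_iff]
  constructor
  · intro h
    refine pathW_self_nonneg_of_nodup A fun i p hl => ?_
    rw [pathW_eq_permWeight_formPerm A hl]
    exact h _
  · intro h
    refine permWeight_nonneg_of_isCycle fun c hc => ?_
    obtain ⟨i, p, hl, rfl⟩ := hc.exists_nodup_formPerm
    rw [← pathW_eq_permWeight_formPerm A hl]
    exact h i p
end

section
/- (Tropical cofactor expansion / block identity) Let A be an n×n matrix over a totally ordered commutative group extended with −∞, and let I ⊆ [1,n]. Then the tropical determinant satisfies |A|_T = max over subsets J ⊆ [1,n] with #J = #I of (|A_{I,J}|_T + |A_{Ī,J̄}|_T), where Ī, J̄ denote complements and A_{I,J} is the submatrix with rows in I and columns in J. -/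
open Finset

/-- Tropical determinant of the submatrix of `A` with rows in `I` and columns
in `J`: the maximum, over bijections `e : I ≃ J`, of `∑_{i ∈ I} A i (e i)`,
with value `⊥ = −∞` when no bijection exists (and `0` for the empty matrix). -/
noncomputable def tdetSub {n : ℕ} {M : Type*} [AddCommGroup M] [LinearOrder M] [IsOrderedAddMonoid M]
    (A : Fin n → Fin n → WithBot M) (I J : Finset (Fin n)) : WithBot M :=
  (Finset.univ : Finset (↥I ≃ ↥J)).sup fun e => ∑ i : ↥I, A i (e i)

/-! A permutation `σ` of `Fin n` restricts to bijections `I ≃ σ(I)` and `Iᶜ ≃ σ(I)ᶜ`, and conversely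
any pair of bijections `I ≃ J`, `Iᶜ ≃ Jᶜ` glues to a permutation; in both directions the weight
`∑ i, A i (σ i)` is the sum of the weights of the two pieces. So every term of `|A|_T` is bounded by
the term `J = σ(I)` on the right-hand side, and every term on the right-hand side is a term of
`|A|_T`. -/

lemma Finset.sup_add_sup_le {ι κ M : Type*} [LinearOrder M] [Add M] {s : Finset ι}
    {t : Finset κ} {f : ι → WithBot M} {g : κ → WithBot M} {c : WithBot M}
    (h : ∀ i ∈ s, ∀ j ∈ t, f i + g j ≤ c) : s.sup f + t.sup g ≤ c := by
  rcases s.eq_empty_or_nonempty with rfl | hs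
  · simp
  rcases t.eq_empty_or_nonempty with rfl | ht
  · simp
  obtain ⟨i, hi, hfi⟩ := s.exists_mem_eq_sup hs f
  obtain ⟨j, hj, hgj⟩ := t.exists_mem_eq_sup ht g
  rw [hfi, hgj]
  exact h i hi j hj

lemma Finset.exists_perm_eq_on_eq_on_compl {α : Type*} [Fintype α] [DecidableEq α]
    {I J : Finset α} (e : I ≃ J) (f : ↥Iᶜ ≃ ↥Jᶜ) :
    ∃ σ : Equiv.Perm α, (∀ i : I, σ i = e i) ∧ ∀ i : ↥Iᶜ, σ i = f i := by
  let compl_equiv (K : Finset α) : ↥Kᶜ ≃ {x // x ∉ K} :=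
    Equiv.subtypeEquivRight fun _ => mem_compl
  refine ⟨Equiv.subtypeCongr e ((compl_equiv I).symm.trans (f.trans (compl_equiv J))), ?_, ?_⟩
  · intro i
    simp [Equiv.subtypeCongr, Equiv.sumCompl_symm_apply_of_pos i.2]
  · intro i
    simp [Equiv.subtypeCongr, Equiv.sumCompl_symm_apply_of_neg (mem_compl.mp i.2), compl_equiv,
      Equiv.symm_apply_eq, Subtype.ext_iff]

section
variable {n : ℕ} {M : Type*} [AddCommGroup M] [LinearOrder M] [IsOrderedAddMonoid M]
  (A : Fin n → Fin n → WithBot M)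

lemma tdetSub_univ_univ :
    tdetSub A univ univ = univ.sup fun σ : Equiv.Perm (Fin n) => ∑ i, A i (σ i) := by
  let u : ↥(univ : Finset (Fin n)) ≃ Fin n := Equiv.subtypeUnivEquiv mem_univ
  rw [tdetSub, ← univ_map_equiv_to_embedding (u.symm.equivCongr u.symm), sup_map]
  exact sup_congr rfl fun σ _ => sum_coe_sort univ fun i => A i (σ i)

lemma sum_le_tdetSub {I J : Finset (Fin n)} (σ : Equiv.Perm (Fin n))
    (hσ : ∀ i, i ∈ I ↔ σ i ∈ J) : ∑ i ∈ I, A i (σ i) ≤ tdetSub A I J := by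
  rw [← sum_coe_sort]
  exact le_sup (f := fun e : I ≃ J => ∑ i : I, A i (e i)) (mem_univ (σ.subtypeEquiv hσ))

lemma tdetSub_add_tdetSub_compl_le {I J : Finset (Fin n)} :
    tdetSub A I J + tdetSub A Iᶜ Jᶜ ≤ tdetSub A univ univ := by
  refine sup_add_sup_le fun e _ f _ => ?_
  obtain ⟨σ, hσI, hσIc⟩ := exists_perm_eq_on_eq_on_compl e f
  calc ∑ i : I, A i (e i) + ∑ i : ↥Iᶜ, A i (f i)
      = ∑ i ∈ I, A i (σ i) + ∑ i ∈ Iᶜ, A i (σ i) := by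
        simp only [← sum_coe_sort I, ← sum_coe_sort Iᶜ, hσI, hσIc]
    _ = ∑ i, A i (σ i) := sum_add_sum_compl I _
    _ ≤ tdetSub A univ univ := by
        rw [tdetSub_univ_univ]
        exact le_sup (f := fun σ : Equiv.Perm (Fin n) => ∑ i, A i (σ i)) (mem_univ σ)

end

/-- Tropical cofactor / block expansion: for every row set `I`,
`|A|_T = max_{#J = #I} (|A_{I,J}|_T + |A_{Ī,J̄}|_T)`. -/
theorem tropDet_block_expansion {n : ℕ} {M : Type*} [AddCommGroup M] [LinearOrder M] [IsOrderedAddMonoid M]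
    (A : Fin n → Fin n → WithBot M) (I : Finset (Fin n)) :
    tdetSub A Finset.univ Finset.univ =
      ((Finset.univ : Finset (Fin n)).powerset.filter fun J => J.card = I.card).sup
        fun J => tdetSub A I J + tdetSub A Iᶜ Jᶜ := by
  refine le_antisymm ?_ (Finset.sup_le fun J _ => tdetSub_add_tdetSub_compl_le A)
  rw [tdetSub_univ_univ]
  refine Finset.sup_le fun σ _ => ?_
  set J := I.image σ
  have hσ (i : Fin n) : i ∈ I ↔ σ i ∈ J := (σ.injective.mem_finset_image).symm
  have hJ : J ∈ univ.powerset.filter fun J => J.card = I.card := by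
    simp [J, card_image_of_injective I σ.injective]
  calc ∑ i, A i (σ i) = ∑ i ∈ I, A i (σ i) + ∑ i ∈ Iᶜ, A i (σ i) := (sum_add_sum_compl I _).symm
    _ ≤ tdetSub A I J + tdetSub A Iᶜ Jᶜ :=
        add_le_add (sum_le_tdetSub A σ hσ) (sum_le_tdetSub A σ fun i => by simp [hσ i])
    _ ≤ _ := le_sup (f := fun J => tdetSub A I J + tdetSub A Iᶜ Jᶜ) hJ
end
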